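/- arXiv:1208.1374 — 4 statements merged into one kernel-verified Lean document; each statement's English description precedes it below -/
import Mathlib

section
/- The residue of the commutator of any two pseudo-differential operators is a total derivative: for A, B pseudo-differential operators, res([A,B]) lies in the image of the derivation D, where res(Σ f_i D^i) = f_{-1}. -/
/-!
Pseudo-differential operators over a commutative differential ring `(A, d)` are
modelled by their coefficient functions `a : ℤ → A` (the coefficient of `D^i`),
with support bounded above.  The product is
`f D^i · g D^j = ∑_{r ≥ 0} C(i,r) f D^r(g) D^{i+j-r}` and the adjoint is
`(f D^i)* = (-D)^i f`.
-/

noncomputable section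

open scoped BigOperators

/-- The generalized binomial coefficient `C(i, r)` for an integer `i`
(the division is exact). -/
def genChoose (i : ℤ) (r : ℕ) : ℤ :=
  (∏ s ∈ Finset.range r, (i - (s : ℤ))) / (r.factorial : ℤ)

variable {A : Type*} [CommRing A]

/-- Coefficient function of the product of two pseudo-differential operators:
`(f D^i) · (g D^j) = ∑_{r ≥ 0} C(i,r) f D^r(g) D^{i+j-r}`. -/
def pdoMul (d : A → A) (a b : ℤ → A) : ℤ → A :=
  fun k => ∑ᶠ (i : ℤ), ∑ᶠ (r : ℕ),
    ((genChoose i r : ℤ) : A) * a i * d^[r] (b (k - i + r))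

/-- Coefficient function of the adjoint `A* = ∑_i (-D)^i f_i`. -/
def pdoAdj (d : A → A) (a : ℤ → A) : ℤ → A :=
  fun k => ∑ᶠ (i : ℤ),
    if k ≤ i then
      ((-1 : A) ^ i.natAbs) * ((genChoose i (i - k).toNat : ℤ) : A)
        * d^[(i - k).toNat] (a i)
    else 0

/-- A pseudo-differential operator has coefficients supported in degrees `≤ N`. -/
def pdoBdd (a : ℤ → A) : Prop := ∃ N : ℤ, ∀ i : ℤ, N < i → a i = 0

/-!
Writing `j = n - 1 - i`, the residue of `a · b` is `∑ C(i, n) aᵢ Dⁿ(b_j)` over `i + j + 1 = n ≥ 0`,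
and the residue of `b · a` is the same sum with `a` and `b` exchanged. Since
`C(n - 1 - i, n) = (-1)ⁿ C(i, n)`, the summand `(i, j)` of the first sum faces the summand
`(j, i)` of the second up to the sign `(-1)ⁿ`, and integration by parts,
`f Dⁿg ≡ (-1)ⁿ g Dⁿf` modulo the image of `D`, makes each such difference a total derivative.
-/

open Function

theorem genChoose_eq_choose (i : ℤ) (n : ℕ) : genChoose i n = Ring.choose i n := by
  have h := Ring.descPochhammer_eq_factorial_smul_choose i n
  rw [← Polynomial.eval_eq_smeval, descPochhammer_eval_eq_prod_range, nsmul_eq_mul] at h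
  rw [genChoose, h, Int.mul_ediv_cancel_left _ (by positivity)]

theorem genChoose_neg_one_sub_add (i : ℤ) (n : ℕ) :
    genChoose (-1 - i + n) n = (-1) ^ n * genChoose i n := by
  rw [genChoose_eq_choose, genChoose_eq_choose, show -1 - i + n = -(i - n + 1) by ring,
    Ring.choose_neg, show i - n + 1 + n - 1 = i by ring, Units.smul_def,
    Int.coe_negOnePow_natCast, smul_eq_mul]

section Residue

variable {R : Type*} [CommRing R] [Algebra R A]

theorem Derivation.mul_iterate_sub_mem_range (D : Derivation R A A) (n : ℕ) (f g : A) :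
    f * D^[n] g - (-1) ^ n * (g * D^[n] f) ∈ LinearMap.range (D : A →ₗ[R] A) := by
  induction n generalizing f with
  | zero => simp [mul_comm]
  | succ n ih =>
    -- `f Dⁿ⁺¹g = D(f Dⁿg) - Df Dⁿg`, and the induction hypothesis applies to `Df Dⁿg`.
    obtain ⟨w, hw⟩ := ih (D f)
    refine ⟨f * D^[n] g - w, ?_⟩
    simp only [Derivation.coeFn_coe, map_sub, Derivation.leibniz, smul_eq_mul] at hw ⊢
    rw [hw, iterate_succ_apply', iterate_succ_apply]
    ring

def resTerm (d : A → A) (a b : ℤ → A) (p : ℤ × ℕ) : A :=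
  ((genChoose p.1 p.2 : ℤ) : A) * a p.1 * d^[p.2] (b (-1 - p.1 + p.2))

theorem pdoMul_neg_one_eq_finsum_resTerm (d : A → A) (a b : ℤ → A)
    (h : HasFiniteSupport (resTerm d a b)) :
    pdoMul d a b (-1) = ∑ᶠ p, resTerm d a b p :=
  (finsum_curry _ h).symm

theorem hasFiniteSupport_resTerm (D : Derivation R A A) {a b : ℤ → A} (ha : pdoBdd a)
    (hb : pdoBdd b) : HasFiniteSupport (resTerm D a b) := by
  obtain ⟨Na, hNa⟩ := ha
  obtain ⟨Nb, hNb⟩ := hb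
  refine ((Set.finite_Icc (-1 - Nb) Na).prod (Set.finite_Iic (Na + Nb + 1).toNat)).subset ?_
  rintro ⟨i, n⟩ hp
  have hai : ¬ Na < i := fun h => hp (by simp [resTerm, hNa i h])
  have hbj : ¬ Nb < -1 - i + n := fun h => hp (by simp [resTerm, hNb _ h, iterate_map_zero])
  simp only [Set.mem_prod, Set.mem_Icc, Set.mem_Iic]
  omega

def resReflect : Equiv.Perm (ℤ × ℕ) :=
  Involutive.toPerm (fun p => (-1 - p.1 + p.2, p.2)) fun _ => Prod.ext (by dsimp only; ring) rfl

theorem resReflect_apply (i : ℤ) (n : ℕ) : resReflect (i, n) = (-1 - i + n, n) := rfl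

theorem resTerm_sub_resTerm_resReflect_mem_range (D : Derivation R A A) (a b : ℤ → A)
    (p : ℤ × ℕ) :
    resTerm D a b p - resTerm D b a (resReflect p) ∈ LinearMap.range (D : A →ₗ[R] A) := by
  obtain ⟨i, n⟩ := p
  have hkey : resTerm D a b (i, n) - resTerm D b a (resReflect (i, n))
      = genChoose i n • (a i * D^[n] (b (-1 - i + n))
          - (-1) ^ n * (b (-1 - i + n) * D^[n] (a i))) := by
    simp only [resTerm, resReflect_apply, genChoose_neg_one_sub_add,
      show -1 - (-1 - i + n) + n = i by ring]
    push_cast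
    ring
  rw [hkey]
  exact zsmul_mem (D.mul_iterate_sub_mem_range n _ _) _

theorem Derivation.pdoMul_sub_pdoMul_neg_one_mem_range (D : Derivation R A A) {a b : ℤ → A}
    (ha : pdoBdd a) (hb : pdoBdd b) :
    pdoMul D a b (-1) - pdoMul D b a (-1) ∈ LinearMap.range (D : A →ₗ[R] A) := by
  have hab := hasFiniteSupport_resTerm D ha hb
  have hba := hasFiniteSupport_resTerm D hb ha
  rw [pdoMul_neg_one_eq_finsum_resTerm _ _ _ hab, pdoMul_neg_one_eq_finsum_resTerm _ _ _ hba,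
    ← finsum_comp_equiv resReflect (f := resTerm D b a),
    ← finsum_sub_distrib hab (hba.fun_comp_of_injective resReflect.injective)]
  exact finsum_induction _ (zero_mem _) (fun _ _ => add_mem)
    (resTerm_sub_resTerm_resReflect_mem_range D a b)

end Residue

/-- The residue (= coefficient of `D^{-1}`) of the commutator
of any two pseudo-differential operators is a total derivative, i.e. lies in
the image of the derivation `d`. -/
theorem res_commutator_is_total_derivative (d : A → A)
    (hd_add : ∀ x y : A, d (x + y) = d x + d y)
    (hd_leibniz : ∀ x y : A, d (x * y) = d x * y + x * d y)
    (a b : ℤ → A) (ha : pdoBdd a) (hb : pdoBdd b) :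
    pdoMul d a b (-1) - pdoMul d b a (-1) ∈ Set.range d := by
  let D : Derivation ℤ A A := Derivation.mk' (AddMonoidHom.mk' d hd_add).toIntLinearMap
    fun x y => by simp [hd_leibniz, mul_comm, add_comm]
  have h := D.pdoMul_sub_pdoMul_neg_one_mem_range ha hb
  rw [← SetLike.mem_coe, LinearMap.coe_range] at h
  exact h
end
end

section
/- In an associative algebra with [L, M] = 1, the elements A_{m,l} = M^m L^l - (-1)^l L^l M^m satisfy [A_{0,2i+1}, A_{1,2j+1}] = 2(2i+1) A_{0,2(i+j)+1} for all integers i, j ≥ 0. -/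
lemma pow_comm_aux {R : Type*} [Ring R] (L M : R) (hcomm : L * M - M * L = 1) :
    ∀ n : ℕ, L ^ (n+1) * M - M * L ^ (n+1) = (n+1 : ℕ) • L ^ n := by
  intro n
  induction n with
  | zero => simpa using hcomm
  | succ k ih =>
    have h2 : L ^ (k+2) * M - M * L ^ (k+2)
        = (L ^ (k+1) * M - M * L ^ (k+1)) * L + L ^ (k+1) * (L * M - M * L) := by
      rw [pow_succ L (k+1)]
      noncomm_ring
    rw [h2, ih, hcomm, mul_one, smul_mul_assoc, ← pow_succ, succ_nsmul, succ_nsmul,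
      succ_nsmul, add_assoc]

/-- In an associative algebra with `[L, M] = 1`, the elements
`A_{m,l} = M^m L^l - (-1)^l L^l M^m` satisfy
`[A_{0,2i+1}, A_{1,2j+1}] = 2(2i+1) A_{0,2(i+j)+1}` for all `i, j ≥ 0`. -/
theorem commutator_A0_A1 {R : Type*} [Ring R]
    (L M : R) (hcomm : L * M - M * L = 1) (i j : ℕ) :
    (L ^ (2 * i + 1) - (-1 : R) ^ (2 * i + 1) * L ^ (2 * i + 1)) *
        (M * L ^ (2 * j + 1) - (-1 : R) ^ (2 * j + 1) * L ^ (2 * j + 1) * M)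
      - (M * L ^ (2 * j + 1) - (-1 : R) ^ (2 * j + 1) * L ^ (2 * j + 1) * M) *
        (L ^ (2 * i + 1) - (-1 : R) ^ (2 * i + 1) * L ^ (2 * i + 1))
      = (2 * (2 * (i : ℤ) + 1)) •
        (L ^ (2 * (i + j) + 1) - (-1 : R) ^ (2 * (i + j) + 1) * L ^ (2 * (i + j) + 1)) := by
  have hodd : ∀ n : ℕ, ((-1 : R) ^ (2 * n + 1)) = -1 := fun n =>
    Odd.neg_one_pow ⟨n, by ring⟩
  rw [hodd, hodd, hodd]
  set a := 2 * i + 1 with ha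
  set b := 2 * j + 1 with hb
  have hc : L ^ a * L ^ b = L ^ b * L ^ a := by
    rw [← pow_add, ← pow_add, add_comm]
  have h := pow_comm_aux L M hcomm (2 * i)
  have e1 : (L ^ a - (-1) * L ^ a) * (M * L ^ b - (-1) * L ^ b * M)
      - (M * L ^ b - (-1) * L ^ b * M) * (L ^ a - (-1) * L ^ a)
      = 2*(L ^ a*(M*L ^ b)) + 2*((L ^ a*L ^ b)*M) - 2*(M*(L ^ b*L ^ a)) - 2*(L ^ b*(M*L ^ a)) := by
    noncomm_ring
  have e2 : 2 * ((L ^ a * M - M * L ^ a) * L ^ b) + 2 * (L ^ b * (L ^ a * M - M * L ^ a))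
      = 2*(L ^ a*(M*L ^ b)) + 2*((L ^ b*L ^ a)*M) - 2*(M*(L ^ a*L ^ b)) - 2*(L ^ b*(M*L ^ a)) := by
    noncomm_ring
  have expand : (L ^ a - (-1) * L ^ a) * (M * L ^ b - (-1) * L ^ b * M)
      - (M * L ^ b - (-1) * L ^ b * M) * (L ^ a - (-1) * L ^ a)
      = 2 * ((L ^ a * M - M * L ^ a) * L ^ b) + 2 * (L ^ b * (L ^ a * M - M * L ^ a)) := by
    rw [e1, e2, hc]
  rw [expand, ha, h]
  have hp : L ^ (2*i) * L ^ b = L ^ (2*(i+j)+1) := by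
    rw [hb, ← pow_add]; ring_nf
  have hp2 : L ^ b * L ^ (2*i) = L ^ (2*(i+j)+1) := by
    rw [hb, ← pow_add]; ring_nf
  simp only [smul_mul_assoc, mul_smul_comm, hp, hp2]
  rw [← smul_add, neg_one_mul, sub_neg_eq_add]
  have hz : (2 * (2 * (i : ℤ) + 1)) = ((2*(2*i+1) : ℕ) : ℤ) := by push_cast; ring
  rw [hz, natCast_zsmul]
  have h4 : (2:R) * L ^ (2*(i+j)+1) + 2 * L ^ (2*(i+j)+1)
      = 2 • (L ^ (2*(i+j)+1) + L ^ (2*(i+j)+1)) := by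
    rw [two_smul]; noncomm_ring
  rw [h4, smul_smul]
  congr 1
  ring
end

section
/- In an associative algebra with [L, M] = 1, the elements A_{1,2i+1} = 2 M L^{2i+1} + (2i+1) L^{2i} satisfy [A_{1,2i+1}, A_{1,2j+1}] = 4(i-j) A_{1,2(i+j)+1} for all integers i, j ≥ 0. -/
section Aux

variable {R : Type*} [Ring R]

lemma key_lemma (L M : R) (hcomm : L * M - M * L = 1) (a b : ℕ) :
    L ^ a * (M * L ^ (b + 1)) = M * L ^ (a + b + 1) + (a : R) * L ^ (a + b) := by
  induction a with
  | zero => simp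
  | succ n ih =>
    have hLM : L * M = M * L + 1 := by rw [← hcomm]; abel
    simp only [show n + 1 + b + 1 = (n + b + 1) + 1 from by omega,
      show n + 1 + b = n + b + 1 from by omega]
    calc L ^ (n+1) * (M * L ^ (b+1)) = L * (L ^ n * (M * L ^ (b+1))) := by
          rw [pow_succ']; rw [mul_assoc]
      _ = L * (M * L ^ (n + b + 1)) + (n : R) * (L * L ^ (n + b)) := by
          rw [ih, mul_add, ((Nat.cast_commute n L).symm).left_comm]
      _ = (M * L + 1) * L ^ (n + b + 1) + (n : R) * L ^ (n + b + 1) := by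
          rw [← hLM, ← pow_succ', mul_assoc]
      _ = M * L ^ ((n + b + 1) + 1) + ((n + 1 : ℕ) : R) * L ^ (n + b + 1) := by
          push_cast
          rw [add_mul, one_mul, add_mul, one_mul, mul_assoc, ← pow_succ']
          abel

lemma key_smul (L M : R) (hcomm : L * M - M * L = 1) (a b : ℕ) :
    L ^ a * (M * L ^ (b + 1)) = M * L ^ (a + b + 1) + a • L ^ (a + b) := by
  rw [key_lemma L M hcomm, nsmul_eq_mul]

lemma X_mul (L M : R) (hcomm : L * M - M * L = 1) (a b : ℕ) :
    (2 • (M * L ^ (a+1)) + (a+1) • L ^ a) * (2 • (M * L ^ (b+1)) + (b+1) • L ^ b)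
      = 4 • (M * (M * L ^ (a+b+2))) + (6*a+2*b+8) • (M * L ^ (a+b+1))
        + (2*(a+1)*a + (a+1)*(b+1)) • L ^ (a+b) := by
  rw [add_mul, mul_add, mul_add]
  rw [smul_mul_smul_comm, smul_mul_smul_comm, smul_mul_smul_comm, smul_mul_smul_comm]
  rw [mul_assoc M, key_smul L M hcomm a b, key_smul L M hcomm (a+1) b]
  rw [show (M * L ^ (a+1)) * L ^ b = M * L ^ (a+b+1) from by
        rw [mul_assoc, ← pow_add]; ring_nf]
  rw [show (L ^ a) * L ^ b = L ^ (a+b) from by rw [← pow_add]]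
  simp only [show a + 1 + b + 1 = a + b + 2 from by omega,
    show a + 1 + b = a + b + 1 from by omega]
  simp only [mul_add, smul_add, mul_smul_comm,
    show a + b + 1 + 1 = a + b + 2 from by omega]
  module

lemma X_comm (L M : R) (hcomm : L * M - M * L = 1) (a b : ℕ) :
    (2 • (M * L ^ (a+1)) + (a+1) • L ^ a) * (2 • (M * L ^ (b+1)) + (b+1) • L ^ b)
      - (2 • (M * L ^ (b+1)) + (b+1) • L ^ b) * (2 • (M * L ^ (a+1)) + (a+1) • L ^ a)
      = (2 * ((a:ℤ) - b)) • (2 • (M * L ^ (a+b+1)) + (a+b+1) • L ^ (a+b)) := by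
  rw [X_mul L M hcomm a b, X_mul L M hcomm b a]
  simp only [show b + a + 2 = a + b + 2 from by omega, show b + a + 1 = a + b + 1 from by omega,
    show b + a = a + b from by omega]
  match_scalars <;> (push_cast; try ring)
end Aux

/-- In an associative algebra with `[L, M] = 1`, the elements
`A_{1,2i+1} = 2 M L^{2i+1} + (2i+1) L^{2i}` satisfy
`[A_{1,2i+1}, A_{1,2j+1}] = 4(i-j) A_{1,2(i+j)+1}` for all `i, j ≥ 0`. -/
theorem commutator_A1_A1 {R : Type*} [Ring R]
    (L M : R) (hcomm : L * M - M * L = 1) (i j : ℕ) :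
    (2 * (M * L ^ (2 * i + 1)) + ((2 * i + 1 : ℕ) : R) * L ^ (2 * i)) *
        (2 * (M * L ^ (2 * j + 1)) + ((2 * j + 1 : ℕ) : R) * L ^ (2 * j))
      - (2 * (M * L ^ (2 * j + 1)) + ((2 * j + 1 : ℕ) : R) * L ^ (2 * j)) *
        (2 * (M * L ^ (2 * i + 1)) + ((2 * i + 1 : ℕ) : R) * L ^ (2 * i))
      = (4 * ((i : ℤ) - (j : ℤ))) •
        (2 * (M * L ^ (2 * (i + j) + 1)) + ((2 * (i + j) + 1 : ℕ) : R) * L ^ (2 * (i + j))) := by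
  have h := X_comm L M hcomm (2 * i) (2 * j)
  simp only [nsmul_eq_mul, Nat.cast_ofNat,
    show 2 * i + 2 * j = 2 * (i + j) from by omega] at h
  rw [h]
  congr 1
  push_cast
  ring
end

section
/- For the function a(z,λ,μ) = ((1-μ/z)/(1+μ/z))·((1+λ/z)/(1-λ/z)) - ((1-z/μ)/(1+z/μ))·((1+z/λ)/(1-z/λ)), where the first term is expanded as a series in 1/z and the second as a series in z, one has the identity a(z,λ,μ) = ((1+λ/z)/(1+μ/z))(z-μ)δ(z,λ) + (μ/λ)((1-z/μ)/(1-z/λ))(z+λ)δ(z,-μ), where δ(z,λ) = (z(1-λ/z))^{-1} + (λ(1-z/λ))^{-1} is the formal delta function. -/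
/-!
Formal distributions in `z` with coefficients Laurent polynomials/series in
`λ, μ` are modelled as functions `ℤ → ℤ → ℤ → ℚ` of the three exponents:
`F a b c` is the coefficient of `z^a λ^b μ^c`.  Products are convolutions
(expressed with `∑ᶠ`; all the sums occurring in the statement below are
pointwise finite).  Each rational expression is encoded by the coefficients
of its expansion in the indicated domain:
* factors with `z` in the denominator are expanded as series in `1/z`,
* factors with `z` in the numerator as series in `z`,
using `1/(1-cx) = ∑_{n≥0} c^n x^n`.
-/

noncomputable section

/-- Trivariate formal distributions: coefficient functions of `z^a λ^b μ^c`. -/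
abbrev D3 := ℤ → ℤ → ℤ → ℚ

/-- Convolution product of trivariate formal distributions. -/
def mul3 (f g : D3) : D3 := fun a b c =>
  ∑ᶠ p : ℤ × ℤ × ℤ, f p.1 p.2.1 p.2.2 * g (a - p.1) (b - p.2.1) (c - p.2.2)

/-- `(1-μ/z)/(1+μ/z)` expanded in `1/z`:  `1 + 2∑_{n≥1} (-1)^n μ^n z^{-n}`. -/
def sA : D3 := fun a b c =>
  if a ≤ 0 ∧ b = 0 ∧ c = -a then (if a = 0 then 1 else 2 * (-1 : ℚ) ^ a.natAbs) else 0

/-- `(1+λ/z)/(1-λ/z)` expanded in `1/z`:  `1 + 2∑_{n≥1} λ^n z^{-n}`. -/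
def sB : D3 := fun a b c =>
  if a ≤ 0 ∧ b = -a ∧ c = 0 then (if a = 0 then 1 else 2) else 0

/-- `(1-z/μ)/(1+z/μ)` expanded in `z`:  `1 + 2∑_{n≥1} (-1)^n μ^{-n} z^n`. -/
def sC : D3 := fun a b c =>
  if 0 ≤ a ∧ b = 0 ∧ c = -a then (if a = 0 then 1 else 2 * (-1 : ℚ) ^ a.natAbs) else 0

/-- `(1+z/λ)/(1-z/λ)` expanded in `z`:  `1 + 2∑_{n≥1} λ^{-n} z^n`. -/
def sD : D3 := fun a b c =>
  if 0 ≤ a ∧ b = -a ∧ c = 0 then (if a = 0 then 1 else 2) else 0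

/-- `(1+λ/z)/(1+μ/z)` expanded in `1/z`:
coefficient of `z^{-n}` is `(-1)^n μ^n + (-1)^{n-1} λ μ^{n-1}` (`n ≥ 1`). -/
def sP1 : D3 := fun a b c =>
  if a ≤ 0 ∧ b = 0 ∧ c = -a then (-1 : ℚ) ^ a.natAbs
  else if a ≤ -1 ∧ b = 1 ∧ c = -a - 1 then (-1 : ℚ) ^ (a + 1).natAbs
  else 0

/-- `(1-z/μ)/(1-z/λ)` expanded in `z`:
coefficient of `z^n` is `λ^{-n} - μ^{-1} λ^{-(n-1)}` (`n ≥ 1`). -/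
def sP2 : D3 := fun a b c =>
  if 0 ≤ a ∧ b = -a ∧ c = 0 then 1
  else if 1 ≤ a ∧ b = -(a - 1) ∧ c = -1 then -1
  else 0

/-- The formal delta function `δ(z,λ) = ∑_{m∈ℤ} z^m λ^{-m-1}`. -/
def deltaL : D3 := fun a b c => if b = -a - 1 ∧ c = 0 then 1 else 0

/-- The formal delta function `δ(z,-μ) = ∑_{m∈ℤ} z^m (-μ)^{-m-1}`. -/
def deltaMneg : D3 := fun a b c =>
  if b = 0 ∧ c = -a - 1 then (-1 : ℚ) ^ (a + 1).natAbs else 0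

/-- The monomial `z - μ`. -/
def zSubMu : D3 := fun a b c =>
  if a = 1 ∧ b = 0 ∧ c = 0 then 1 else if a = 0 ∧ b = 0 ∧ c = 1 then -1 else 0

/-- The monomial `z + λ`. -/
def zAddLam : D3 := fun a b c =>
  if a = 1 ∧ b = 0 ∧ c = 0 then 1 else if a = 0 ∧ b = 1 ∧ c = 0 then 1 else 0

/-- The monomial `μ/λ`. -/
def muDivLam : D3 := fun a b c => if a = 0 ∧ b = -1 ∧ c = 1 then 1 else 0


/-!
Every convolution in the identity is a sum of at most two terms: one factor is a monomial or a
binomial, or is supported on a line (the delta functions, the expansions of `(1-μ/z)/(1+μ/z)`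
and `(1-z/μ)/(1+z/μ)`) whose translates meet the support of the other factor in at most two
points. Both sides thereby become the same finite combination of coefficients of the expansions.
Every factor is homogeneous, so all of these vanish off the plane `a + b + c = 0`; on that plane
the identity is a case check on the signs of the exponents of `λ` and `μ`.
-/

open Finset

lemma mul3_apply_eq_sum {f g : D3} {a b c : ℤ} (s : Finset (ℤ × ℤ × ℤ))
    (hs : ∀ x y z, (x, y, z) ∉ s → f x y z * g (a - x) (b - y) (c - z) = 0) :
    mul3 f g a b c = ∑ p ∈ s, f p.1 p.2.1 p.2.2 * g (a - p.1) (b - p.2.1) (c - p.2.2) :=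
  finsum_eq_sum_of_support_subset _ fun ⟨x, y, z⟩ hp => by_contra fun h => hp (hs x y z h)

lemma mul3_apply_eq_mul_of_support {f g : D3} (hf : ∀ x y z, f x y z ≠ 0 → y = 0 ∧ z = -x)
    (hg : ∀ x y z, g x y z ≠ 0 → z = 0) (a b c : ℤ) :
    mul3 f g a b c = f (-c) 0 c * g (a + c) b 0 := by
  rw [mul3_apply_eq_sum {(-c, 0, c)}, sum_singleton]
  · simp only [sub_neg_eq_add, sub_zero, sub_self]
  · intro x y z hp
    by_contra h
    obtain ⟨hy, hz⟩ := hf x y z (left_ne_zero_of_mul h)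
    have := hg _ _ _ (right_ne_zero_of_mul h)
    exact hp (by simp only [mem_singleton, Prod.mk.injEq]; omega)

lemma mul3_zSubMu (f : D3) (a b c : ℤ) :
    mul3 f zSubMu a b c = f (a - 1) b c - f a b (c - 1) := by
  rw [mul3_apply_eq_sum {(a - 1, b, c), (a, b, c - 1)}, sum_pair (by simp)]
  · simp [zSubMu, sub_eq_add_neg]
  · intro x y z hp
    simp only [mem_insert, mem_singleton, Prod.mk.injEq] at hp
    simp only [zSubMu]
    split_ifs <;> first | omega | ring

lemma mul3_zAddLam (f : D3) (a b c : ℤ) :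
    mul3 f zAddLam a b c = f (a - 1) b c + f a (b - 1) c := by
  rw [mul3_apply_eq_sum {(a - 1, b, c), (a, b - 1, c)}, sum_pair (by simp)]
  · simp [zAddLam]
  · intro x y z hp
    simp only [mem_insert, mem_singleton, Prod.mk.injEq] at hp
    simp only [zAddLam]
    split_ifs <;> first | omega | ring

lemma mul3_muDivLam (g : D3) (a b c : ℤ) : mul3 muDivLam g a b c = g a (b + 1) (c - 1) := by
  rw [mul3_apply_eq_sum {(0, -1, 1)}, sum_singleton]
  · simp [muDivLam]
  · intro x y z hp
    simp only [mem_singleton, Prod.mk.injEq] at hp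
    simp only [muDivLam]
    rw [if_neg hp, zero_mul]

lemma mul3_deltaL {f : D3} (hf : ∀ x y z, f x y z ≠ 0 → y = 0 ∨ y = 1) (a b c : ℤ) :
    mul3 f deltaL a b c = f (a + b + 1) 0 c + f (a + b) 1 c := by
  rw [mul3_apply_eq_sum {(a + b + 1, 0, c), (a + b, 1, c)}, sum_pair (by simp)]
  · simp only [deltaL]
    rw [if_pos (by omega), if_pos (by omega), mul_one, mul_one]
  · intro x y z hp
    simp only [mem_insert, mem_singleton, Prod.mk.injEq] at hp
    by_contra h
    have := hf x y z (left_ne_zero_of_mul h)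
    obtain ⟨_, -⟩ := ite_ne_right_iff.mp (right_ne_zero_of_mul h)
    omega

lemma mul3_deltaMneg {f : D3} (hf : ∀ x y z, f x y z ≠ 0 → z = 0 ∨ z = -1) (a b c : ℤ) :
    mul3 f deltaMneg a b c
      = f (a + c + 1) b 0 * (-1) ^ c.natAbs + f (a + c + 2) b (-1) * (-1) ^ (c + 1).natAbs := by
  rw [mul3_apply_eq_sum {(a + c + 1, b, 0), (a + c + 2, b, -1)}, sum_pair (by simp)]
  · simp only [deltaMneg]
    rw [if_pos (by omega), if_pos (by omega), show a - (a + c + 1) + 1 = -c by ring,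
      show a - (a + c + 2) + 1 = -(c + 1) by ring, Int.natAbs_neg, Int.natAbs_neg]
  · intro x y z hp
    simp only [mem_insert, mem_singleton, Prod.mk.injEq] at hp
    by_contra h
    have := hf x y z (left_ne_zero_of_mul h)
    obtain ⟨_, -⟩ := ite_ne_right_iff.mp (right_ne_zero_of_mul h)
    omega

lemma mul3_zSubMu_support {f : D3} {P : ℤ → Prop} (hf : ∀ x y z, f x y z ≠ 0 → P y)
    (x y z : ℤ) (h : mul3 f zSubMu x y z ≠ 0) : P y := by
  rw [mul3_zSubMu] at h
  by_cases h₁ : f (x - 1) y z = 0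
  · exact hf x y (z - 1) fun h₂ => h (by rw [h₁, h₂, sub_zero])
  · exact hf _ _ _ h₁

lemma mul3_zAddLam_support {f : D3} {P : ℤ → Prop} (hf : ∀ x y z, f x y z ≠ 0 → P z)
    (x y z : ℤ) (h : mul3 f zAddLam x y z ≠ 0) : P z := by
  rw [mul3_zAddLam] at h
  by_cases h₁ : f (x - 1) y z = 0
  · exact hf x (y - 1) z fun h₂ => h (by rw [h₁, h₂, add_zero])
  · exact hf _ _ _ h₁

lemma sA_support (x y z : ℤ) (h : sA x y z ≠ 0) : y = 0 ∧ z = -x :=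
  (ite_ne_right_iff.mp h).1.2

lemma sB_support (x y z : ℤ) (h : sB x y z ≠ 0) : z = 0 := (ite_ne_right_iff.mp h).1.2.2

lemma sC_support (x y z : ℤ) (h : sC x y z ≠ 0) : y = 0 ∧ z = -x :=
  (ite_ne_right_iff.mp h).1.2

lemma sD_support (x y z : ℤ) (h : sD x y z ≠ 0) : z = 0 := (ite_ne_right_iff.mp h).1.2.2

lemma sP1_support (x y z : ℤ) (h : sP1 x y z ≠ 0) : y = 0 ∨ y = 1 := by
  unfold sP1 at h
  split_ifs at h <;> tauto

lemma sP2_support (x y z : ℤ) (h : sP2 x y z ≠ 0) : z = 0 ∨ z = -1 := by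
  unfold sP2 at h
  split_ifs at h <;> tauto

lemma coeff_identity (a b c : ℤ) :
    sA (-c) 0 c * sB (a + c) b 0 - sC (-c) 0 c * sD (a + c) b 0 =
      sP1 (a + b) 0 c - sP1 (a + b + 1) 0 (c - 1) + (sP1 (a + b - 1) 1 c - sP1 (a + b) 1 (c - 1))
      + ((sP2 (a + c - 1) (b + 1) 0 + sP2 (a + c) b 0) * (-1) ^ (c - 1).natAbs
      + (sP2 (a + c) (b + 1) (-1) + sP2 (a + c + 1) b (-1)) * (-1) ^ c.natAbs) := by
  by_cases hab : a + b + c = 0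
  · rw [show a + b = -c by omega]
    -- once the signs of `c` and `a + c = -b` are fixed, `omega` decides every condition
    rcases lt_trichotomy (a + c) 0 with hm | hm | hm <;>
      rcases lt_trichotomy c 0 with hc | rfl | hc <;>
      simp (disch := omega) only [sA, sB, sC, sD, sP1, sP2, if_pos, if_neg, and_true, true_and,
        ← Int.coe_negOnePow ℚ] <;>
      simp only [Int.negOnePow_neg, Int.negOnePow_add, Int.negOnePow_sub, Int.negOnePow_one,
        Int.negOnePow_zero, Units.val_mul, Units.val_neg, Units.val_one, Int.cast_mul,
        Int.cast_neg, Int.cast_one] <;>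
      ring
  · simp (disch := omega) only [sA, sB, sC, sD, sP1, sP2, if_neg]
    simp

/-- The identity
`a(z,λ,μ) = ((1-μ/z)/(1+μ/z))((1+λ/z)/(1-λ/z)) - ((1-z/μ)/(1+z/μ))((1+z/λ)/(1-z/λ))
 = ((1+λ/z)/(1+μ/z))(z-μ)δ(z,λ) + (μ/λ)((1-z/μ)/(1-z/λ))(z+λ)δ(z,-μ)`
as formal distributions in `z` with Laurent coefficients in `λ, μ`. -/
theorem a_z_lambda_mu_identity :
    mul3 sA sB - mul3 sC sD
      = mul3 (mul3 sP1 zSubMu) deltaL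
        + mul3 muDivLam (mul3 (mul3 sP2 zAddLam) deltaMneg) := by
  funext a b c
  simp only [Pi.sub_apply, Pi.add_apply, mul3_apply_eq_mul_of_support sA_support sB_support,
    mul3_apply_eq_mul_of_support sC_support sD_support,
    mul3_deltaL (mul3_zSubMu_support sP1_support), mul3_zSubMu, mul3_muDivLam,
    mul3_deltaMneg (mul3_zAddLam_support sP2_support), mul3_zAddLam, add_sub_cancel_right,
    sub_add_cancel]
  convert coeff_identity a b c using 6 <;> ring
end
end
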